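/- There is no assignment of signs a, b, c ∈ {−1, 1} (in ℤ) satisfying all of the constraints imposed by the unliftable shadow movie, namely: (i) the constraint from the first type III move, ((−a = b ∧ b = −c) ∨ (−a = b ∧ b = c) ∨ (a = b ∧ b = c)); (ii) the constraint from the second type III move, ((−c = c ∧ c = −a) ∨ (−c = c ∧ c = a) ∨ (a = c)); (iii) the constraint from the third type III move, ((a = −a ∧ −a = b) ∨ (a = −a ∧ −a = −b) ∨ (a = b)); and (iv) the constraint b = −c from the final type II move. -/

import Mathlib

/-!
A sign is never its own negative, so the self-negation alternatives of the second and third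
type III constraints are impossible: they force `a = c` and `a = b`. Then `b = c`, which
contradicts `b = -c` from the final type II move.
-/

theorem ne_zero_of_eq_neg_one_or_eq_one {R : Type*} [Ring R] [Nontrivial R] {x : R}
    (hx : x = -1 ∨ x = 1) : x ≠ 0 := by
  rcases hx with rfl | rfl
  exacts [neg_ne_zero.2 one_ne_zero, one_ne_zero]

theorem unliftable_shadow_movie_constraints_unsat :
    ¬ ∃ a b c : ℤ, (a = -1 ∨ a = 1) ∧ (b = -1 ∨ b = 1) ∧ (c = -1 ∨ c = 1) ∧
      ((-a = b ∧ b = -c) ∨ (-a = b ∧ b = c) ∨ (a = b ∧ b = c)) ∧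
      ((-c = c ∧ c = -a) ∨ (-c = c ∧ c = a) ∨ (a = c)) ∧
      ((a = -a ∧ -a = b) ∨ (a = -a ∧ -a = -b) ∨ (a = b)) ∧
      b = -c := by
  rintro ⟨a, b, c, ha, -, hc, -, h₂, h₃, hb_neg⟩
  have ha₀ := ne_zero_of_eq_neg_one_or_eq_one ha
  have hc₀ := ne_zero_of_eq_neg_one_or_eq_one hc
  have hac : a = c := by simpa only [neg_eq_self, hc₀, false_and, false_or] using h₂
  have hab : a = b := by simpa only [self_eq_neg, ha₀, false_and, false_or] using h₃
  have hbc : b = c := hab.symm.trans hac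
  exact hc₀ (self_eq_neg.1 (hbc.symm.trans hb_neg))
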